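/- The Laplace transform E[e^{-σV}] of the limiting finite Voronoï cell volume distribution satisfies E[e^{-σV}] → 1 as σ → 0⁺ and has the expansion E[e^{-σV}] = 1 - (665√3/1024)σ^{1/4} + (49/(768√3))σ^{3/4} + (63/80)σ + O(σ^{5/4}). -/

import Mathlib

open Real Filter Asymptotics

noncomputable def Ppoly (r : ℝ) : ℝ :=
  96 * (-252 - 399 * Real.sqrt 3 * r - 756 * r ^ 2 - 161 * Real.sqrt 3 * r ^ 3
    + 170 * r ^ 4 + 153 * Real.sqrt 3 * r ^ 5 + 144 * r ^ 6 + 22 * Real.sqrt 3 * r ^ 7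
    + 4 * r ^ 8)

noncomputable def P1poly (r γ : ℝ) : ℝ :=
  126 * (168 + 85 * γ) + 63 * Real.sqrt 3 * r * (867 + 596 * γ)
    + 1323 * r ^ 2 * (132 + 95 * γ) + 28 * Real.sqrt 3 * r ^ 3 * (3153 + 2300 * γ)
    + 24 * r ^ 4 * (2463 + 1843 * γ) + Real.sqrt 3 * r ^ 5 * (588 + 905 * γ)
    - 36 * r ^ 6 * (177 + 124 * γ) - 6 * Real.sqrt 3 * r ^ 7 * (174 + 127 * γ)
    - 36 * r ^ 8 * (4 + 3 * γ)

noncomputable def P2poly (r γ : ℝ) : ℝ :=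
  -8 * (63 * (24 + 17 * γ) + 63 * Real.sqrt 3 * r * (105 + 74 * γ)
    + 378 * r ^ 2 * (78 + 55 * γ) + 14 * Real.sqrt 3 * r ^ 3 * (1569 + 1108 * γ)
    + 12 * r ^ 4 * (2337 + 1652 * γ) + Real.sqrt 3 * r ^ 5 * (6954 + 4919 * γ)
    + 18 * r ^ 6 * (154 + 109 * γ) + 6 * Real.sqrt 3 * r ^ 7 * (24 + 17 * γ))

noncomputable def P3poly (r γ : ℝ) : ℝ :=
  126 * (24 + 17 * γ) + 63 * Real.sqrt 3 * r * (277 + 196 * γ)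
    + 189 * r ^ 2 * (516 + 365 * γ) + 28 * Real.sqrt 3 * r ^ 3 * (3399 + 2404 * γ)
    + 24 * r ^ 4 * (7193 + 5087 * γ) + Real.sqrt 3 * r ^ 5 * (68436 + 48397 * γ)
    + 36 * r ^ 6 * (1465 + 1036 * γ) + 6 * Real.sqrt 3 * r ^ 7 * (1342 + 949 * γ)
    + 12 * r ^ 8 * (140 + 99 * γ)

noncomputable def Qpoly (r : ℝ) : ℝ := 1 + Real.sqrt 3 * r + r ^ 2

/-- The Laplace transform E[e^{-σV}] of the finite Voronoï cell volume law,
formula (3.14), with r = σ^{1/4}. -/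
noncomputable def Elaplace (σ : ℝ) : ℝ :=
  let r := σ ^ ((1 : ℝ) / 4)
  (3 / 2) * (Ppoly r +
      (P1poly r (Real.sqrt 2) * Real.exp (Real.sqrt 6 * r)
        + P1poly r (-Real.sqrt 2) * Real.exp (-(Real.sqrt 6 * r)))
      + (P2poly r (Real.sqrt 2) * Real.exp (2 * Real.sqrt 6 * r)
        + P2poly r (-Real.sqrt 2) * Real.exp (-(2 * Real.sqrt 6 * r)))
      + (P3poly r (Real.sqrt 2) * Real.exp (3 * Real.sqrt 6 * r)
        + P3poly r (-Real.sqrt 2) * Real.exp (-(3 * Real.sqrt 6 * r)))) /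
    (Qpoly r * (4 + (4 + 3 * Real.sqrt 2) * Real.exp (Real.sqrt 6 * r)
        + (4 - 3 * Real.sqrt 2) * Real.exp (-(Real.sqrt 6 * r))) - 12) ^ 4

/-! Write `r = σ^{1/4}`, `y = √3 r`, and `N`, `D` for the numerator and denominator of (3.14),
so that `E[e^{-σV}] = 3/2 · N / D⁴`. Replacing `exp` by its Taylor polynomial of degree 8 changes
`N` and `D` by `O(r⁹)` only and turns them into polynomials with rational coefficients in `y`:
`N = 221184 y⁴ (1 + O(y))` and `D = 24 y (1 + O(y))`, where `3/2 · 221184 = 24⁴`. After truncation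
at relative order `y⁵`, the claimed expansion `A` is the Taylor polynomial of degree 4 of the
quotient, a polynomial identity, so `3/2 N - A D⁴ = O(r⁹)`. Since `D ≥ 24 √3 r`, dividing by `D⁴`
leaves `O(r⁵) = O(σ^{5/4})`. -/

open Topology Finset
open scoped Nat

namespace VoronoiLaplace

noncomputable section

lemma isBigO_comp_const_mul {f : ℝ → ℝ} {n : ℕ} (hf : f =O[𝓝 0] (· ^ n)) (c : ℝ) :
    (fun x => f (c * x)) =O[𝓝 0] (· ^ n) := by
  refine (hf.comp_tendsto ((continuous_const_mul c).tendsto' 0 0 (mul_zero c))).trans ?_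
  simpa [Function.comp_def, mul_pow] using isBigO_const_mul_self (c ^ n) (· ^ n) (𝓝 (0 : ℝ))

lemma isBigO_mul_comp_const_mul {P f : ℝ → ℝ} {n : ℕ} (hP : Continuous P)
    (hf : f =O[𝓝 0] (· ^ n)) (c : ℝ) :
    (fun x => P x * f (c * x)) =O[𝓝 0] (· ^ n) := by
  simpa using ((hP.tendsto 0).isBigO_one ℝ).mul (isBigO_comp_const_mul hf c)

lemma isBigO_pow_of_eq_pow_mul {f g : ℝ → ℝ} {n : ℕ} (hg : Continuous g)
    (h : ∀ x, f x = x ^ n * g x) : f =O[𝓝 0] (· ^ n) := by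
  simpa [← funext h] using (isBigO_refl (· ^ n) (𝓝 (0 : ℝ))).mul ((hg.tendsto 0).isBigO_one ℝ)

lemma isBigO_div_pow_sub {N D A : ℝ → ℝ} {k m : ℕ} {c : ℝ} (hc : 0 < c)
    (hD : ∀ x, 0 < x → c * x ≤ D x)
    (h : (fun x => N x - A x * D x ^ k) =O[𝓝[>] 0] (· ^ (m + k))) :
    (fun x => N x / D x ^ k - A x) =O[𝓝[>] 0] (· ^ m) := by
  have hpos : ∀ᶠ x in 𝓝[>] (0 : ℝ), 0 < x := self_mem_nhdsWithin
  have hinv : (fun x => (D x ^ k)⁻¹) =O[𝓝[>] 0] (fun x => (x ^ k)⁻¹) := by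
    refine IsBigO.of_bound ((c ^ k)⁻¹) ?_
    filter_upwards [hpos] with x hx
    have hcx : 0 < c * x := mul_pos hc hx
    have hle : (c * x) ^ k ≤ D x ^ k := pow_le_pow_left₀ hcx.le (hD x hx) k
    rw [norm_inv, norm_inv, norm_of_nonneg (hcx.le.trans (hD x hx) |> pow_nonneg <| k),
      norm_of_nonneg (pow_nonneg hx.le k), ← mul_inv, ← mul_pow]
    exact inv_anti₀ (by positivity) hle
  refine (h.mul hinv).congr' ?_ ?_
  · filter_upwards [hpos] with x hx
    have hDx : D x ^ k ≠ 0 := (pow_pos (mul_pos hc hx |>.trans_le (hD x hx)) k).ne'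
    field_simp
  · filter_upwards [hpos] with x hx
    field_simp
    ring

@[fun_prop]
lemma continuous_P1poly (γ : ℝ) : Continuous (P1poly · γ) := by unfold P1poly; fun_prop

@[fun_prop]
lemma continuous_P2poly (γ : ℝ) : Continuous (P2poly · γ) := by unfold P2poly; fun_prop

@[fun_prop]
lemma continuous_P3poly (γ : ℝ) : Continuous (P3poly · γ) := by unfold P3poly; fun_prop

@[fun_prop]
lemma continuous_Qpoly : Continuous Qpoly := by unfold Qpoly; fun_prop

def numeratorWith (E : ℝ → ℝ) (r : ℝ) : ℝ :=
  Ppoly r + (P1poly r √2 * E (√6 * r) + P1poly r (-√2) * E (-(√6 * r)))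
    + (P2poly r √2 * E (2 * √6 * r) + P2poly r (-√2) * E (-(2 * √6 * r)))
    + (P3poly r √2 * E (3 * √6 * r) + P3poly r (-√2) * E (-(3 * √6 * r)))

def denominatorWith (E : ℝ → ℝ) (r : ℝ) : ℝ :=
  Qpoly r * (4 + (4 + 3 * √2) * E (√6 * r) + (4 - 3 * √2) * E (-(√6 * r))) - 12

lemma Elaplace_eq (σ : ℝ) :
    Elaplace σ = 3 / 2 * numeratorWith exp (σ ^ ((1 : ℝ) / 4))
      / denominatorWith exp (σ ^ ((1 : ℝ) / 4)) ^ 4 :=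
  rfl

lemma numeratorWith_sub_isBigO {E₁ E₂ : ℝ → ℝ} {n : ℕ}
    (h : (fun x => E₁ x - E₂ x) =O[𝓝 0] (· ^ n)) :
    (fun r => numeratorWith E₁ r - numeratorWith E₂ r) =O[𝓝 0] (· ^ n) := by
  have hpair : ∀ (P : ℝ → ℝ → ℝ) (c : ℝ), (∀ γ, Continuous (P · γ)) →
      (fun r => (P r √2 * E₁ (c * r) + P r (-√2) * E₁ (-(c * r)))
        - (P r √2 * E₂ (c * r) + P r (-√2) * E₂ (-(c * r))))
        =O[𝓝 0] (· ^ n) := fun P c hP => by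
    have hpos := isBigO_mul_comp_const_mul (hP √2) h c
    have hneg := isBigO_mul_comp_const_mul (hP (-√2)) h (-c)
    simp only [neg_mul] at hneg
    exact (hpos.add hneg).congr_left fun r => by ring
  refine ((hpair P1poly √6 continuous_P1poly).add (hpair P2poly (2 * √6) continuous_P2poly)).add
    (hpair P3poly (3 * √6) continuous_P3poly) |>.congr_left fun r => ?_
  simp only [numeratorWith]
  ring

lemma denominatorWith_sub_isBigO {E₁ E₂ : ℝ → ℝ} {n : ℕ}
    (h : (fun x => E₁ x - E₂ x) =O[𝓝 0] (· ^ n)) :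
    (fun r => denominatorWith E₁ r - denominatorWith E₂ r) =O[𝓝 0] (· ^ n) := by
  have hpos := isBigO_mul_comp_const_mul
    (by fun_prop : Continuous fun r => Qpoly r * (4 + 3 * √2)) h √6
  have hneg := isBigO_mul_comp_const_mul
    (by fun_prop : Continuous fun r => Qpoly r * (4 - 3 * √2)) h (-√6)
  simp only [neg_mul] at hneg
  refine (hpos.add hneg).congr_left fun r => ?_
  simp only [denominatorWith]
  ring

def expTaylor (x : ℝ) : ℝ := ∑ i ∈ range 9, x ^ i / i !

/- Polynomials in `y = √3 r`, obtained by exact rational series arithmetic. -/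

def numeratorHead (y : ℝ) : ℝ :=
  1 + 3431 / 1024 * y + 4661 / 768 * y ^ 2 + 106613 / 13824 * y ^ 3 + 131929 / 17280 * y ^ 4

def numeratorTail (y : ℝ) : ℝ :=
  10287937 / 1658880 + 344371 / 82944 * y + 19387223 / 8709120 * y ^ 2
    + 751819 / 816480 * y ^ 3 + 210233 / 746496 * y ^ 4 + 4693267 / 78382080 * y ^ 5
    + 68821 / 8709120 * y ^ 6 + 299 / 612360 * y ^ 7

def denominatorHead (y : ℝ) : ℝ := 1 + y + 2 / 3 * y ^ 2 + 1 / 3 * y ^ 3 + 23 / 180 * y ^ 4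

def denominatorTail (y : ℝ) : ℝ :=
  7 / 180 + 19 / 1890 * y + 7 / 3240 * y ^ 2 + 1 / 2520 * y ^ 3 + 1 / 22680 * y ^ 4

def expansion (y : ℝ) : ℝ := 1 - 665 / 1024 * y + 49 / 6912 * y ^ 3 + 7 / 80 * y ^ 4

def expansionRemainder (y : ℝ) : ℝ :=
  158251 / 25920 + 1689191 / 414720 * y + 2970497 / 1244160 * y ^ 2
    + 1422251 / 1036800 * y ^ 3 + 26579513 / 29859840 * y ^ 4 + 50419889 / 74649600 * y ^ 5
    + 47140387 / 89579520 * y ^ 6 + 419285347 / 1119744000 * y ^ 7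
    + 3107245381 / 13436928000 * y ^ 8 + 546638347 / 4478976000 * y ^ 9
    + 548155889 / 10077696000 * y ^ 10 + 4078446889 / 201553920000 * y ^ 11
    + 59399267711 / 9674588160000 * y ^ 12 + 220539571 / 151165440000 * y ^ 13
    + 1779776593 / 7255941120000 * y ^ 14 + 1958887 / 83980800000 * y ^ 15

lemma sqrt_six_eq : √6 = √2 * √3 := by
  rw [← Real.sqrt_mul (by norm_num)]
  norm_num

lemma numeratorWith_expTaylor (r : ℝ) :
    numeratorWith expTaylor r = 221184 * (√3 * r) ^ 4
      * (numeratorHead (√3 * r) + (√3 * r) ^ 5 * numeratorTail (√3 * r)) := by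
  have h2 : √2 ^ 2 = 2 := Real.sq_sqrt (by norm_num)
  have h3 : √3 ^ 2 = 3 := Real.sq_sqrt (by norm_num)
  simp only [numeratorWith, expTaylor, sum_range_succ, sum_range_zero, Nat.factorial,
    sqrt_six_eq, Ppoly, P1poly, P2poly, P3poly, numeratorHead, numeratorTail]
  push_cast
  grind

lemma denominatorWith_expTaylor (r : ℝ) :
    denominatorWith expTaylor r = 24 * (√3 * r)
      * (denominatorHead (√3 * r) + (√3 * r) ^ 5 * denominatorTail (√3 * r)) := by
  have h2 : √2 ^ 2 = 2 := Real.sq_sqrt (by norm_num)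
  have h3 : √3 ^ 2 = 3 := Real.sq_sqrt (by norm_num)
  simp only [denominatorWith, expTaylor, sum_range_succ, sum_range_zero, Nat.factorial,
    sqrt_six_eq, Qpoly, denominatorHead, denominatorTail]
  push_cast
  grind

lemma numeratorHead_sub_expansion_mul (y : ℝ) :
    numeratorHead y - expansion y * denominatorHead y ^ 4 = -(y ^ 5 * expansionRemainder y) := by
  unfold numeratorHead expansion denominatorHead expansionRemainder
  ring

lemma truncated_sub_expansion_mul_pow_isBigO :
    (fun y => 3 / 2 * (221184 * y ^ 4 * (numeratorHead y + y ^ 5 * numeratorTail y))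
      - expansion y * (24 * y * (denominatorHead y + y ^ 5 * denominatorTail y)) ^ 4)
      =O[𝓝 0] (· ^ 9) := by
  refine isBigO_pow_of_eq_pow_mul (g := fun y => 331776 * (numeratorTail y
      - expansionRemainder y - expansion y * denominatorTail y
        * ((denominatorHead y + y ^ 5 * denominatorTail y) ^ 3
          + (denominatorHead y + y ^ 5 * denominatorTail y) ^ 2 * denominatorHead y
          + (denominatorHead y + y ^ 5 * denominatorTail y) * denominatorHead y ^ 2
          + denominatorHead y ^ 3)))
    (by unfold numeratorTail expansionRemainder expansion denominatorHead denominatorTail; fun_prop)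
    fun y => ?_
  linear_combination 331776 * y ^ 4 * numeratorHead_sub_expansion_mul y

lemma numeratorWith_exp_sub_expansion_mul_isBigO :
    (fun r => 3 / 2 * numeratorWith exp r - expansion (√3 * r) * denominatorWith exp r ^ 4)
      =O[𝓝 0] (· ^ 9) := by
  have hN : (fun r => numeratorWith exp r - numeratorWith expTaylor r) =O[𝓝 0] (· ^ 9) :=
    numeratorWith_sub_isBigO (exp_sub_sum_range_isBigO_pow 9)
  have hD : (fun r => denominatorWith exp r - denominatorWith expTaylor r) =O[𝓝 0] (· ^ 9) :=
    denominatorWith_sub_isBigO (exp_sub_sum_range_isBigO_pow 9)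
  have hT : (fun r => 3 / 2 * numeratorWith expTaylor r
      - expansion (√3 * r) * denominatorWith expTaylor r ^ 4) =O[𝓝 0] (· ^ 9) := by
    simpa only [numeratorWith_expTaylor, denominatorWith_expTaylor]
      using isBigO_comp_const_mul truncated_sub_expansion_mul_pow_isBigO √3
  have hcont : Continuous fun r => expansion (√3 * r) * (denominatorWith exp r ^ 3
      + denominatorWith exp r ^ 2 * denominatorWith expTaylor r
      + denominatorWith exp r * denominatorWith expTaylor r ^ 2
      + denominatorWith expTaylor r ^ 3) := by
    unfold expansion denominatorWith expTaylor
    fun_prop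
  refine ((hT.add (hN.const_mul_left (3 / 2))).sub
    (((hcont.tendsto 0).isBigO_one ℝ).mul hD |>.congr_right fun _ => one_mul _)).congr_left
    fun r => by ring

lemma denominatorWith_exp_ge {r : ℝ} (hr : 0 < r) : 24 * √3 * r ≤ denominatorWith exp r := by
  have h3 : √3 * √3 = 3 := Real.mul_self_sqrt (by norm_num)
  have h26 : √2 * √6 = 2 * √3 := by
    rw [sqrt_six_eq, ← mul_assoc, Real.mul_self_sqrt (by norm_num)]
  have hcosh : 1 ≤ cosh (√6 * r) := one_le_cosh _
  have hsinh : √2 * (√6 * r) ≤ √2 * sinh (√6 * r) :=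
    mul_le_mul_of_nonneg_left (self_le_sinh_iff.mpr (by positivity)) (by positivity)
  have hQ : 1 + √3 * r ≤ Qpoly r := by
    unfold Qpoly
    nlinarith
  have hB : 12 + 12 * √3 * r ≤ 4 + 8 * cosh (√6 * r) + 6 * (√2 * sinh (√6 * r)) := by
    nlinarith
  have hD : denominatorWith exp r
      = Qpoly r * (4 + 8 * cosh (√6 * r) + 6 * (√2 * sinh (√6 * r))) - 12 := by
    rw [cosh_eq, sinh_eq, denominatorWith]
    ring
  have hprod : (1 + √3 * r) * (12 + 12 * √3 * r) = 12 + 24 * √3 * r + 36 * r ^ 2 := by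
    linear_combination 12 * r ^ 2 * h3
  rw [hD]
  nlinarith [mul_le_mul hQ hB (by positivity) ((by positivity : (0 : ℝ) ≤ 1 + √3 * r).trans hQ)]

lemma numeratorWith_exp_div_sub_expansion_isBigO :
    (fun r => 3 / 2 * numeratorWith exp r / denominatorWith exp r ^ 4 - expansion (√3 * r))
      =O[𝓝[>] 0] (· ^ 5) :=
  isBigO_div_pow_sub (by positivity : (0 : ℝ) < 24 * √3) (fun _ => denominatorWith_exp_ge)
    (numeratorWith_exp_sub_expansion_mul_isBigO.mono nhdsWithin_le_nhds)

lemma expansion_sqrt_three_mul (r : ℝ) :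
    expansion (√3 * r)
      = 1 - 665 * √3 / 1024 * r + 49 / (768 * √3) * r ^ 3 + 63 / 80 * r ^ 4 := by
  have h3 : √3 ^ 2 = 3 := Real.sq_sqrt (by norm_num)
  have h3' : √3 ≠ 0 := by positivity
  unfold expansion
  field_simp
  grind

lemma tendsto_rpow_one_div_four_nhdsGT :
    Tendsto (fun σ : ℝ => σ ^ ((1 : ℝ) / 4)) (𝓝[>] 0) (𝓝[>] 0) := by
  refine tendsto_nhdsWithin_iff.mpr ⟨?_, ?_⟩
  · have h := (Real.continuousAt_rpow_const 0 ((1 : ℝ) / 4) (Or.inr (by norm_num))).tendsto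
    rw [Real.zero_rpow (by norm_num)] at h
    exact h.mono_left nhdsWithin_le_nhds
  · filter_upwards [self_mem_nhdsWithin] with σ hσ using Real.rpow_pos_of_pos hσ _

lemma rpow_one_div_four_pow {σ : ℝ} (hσ : 0 ≤ σ) (n : ℕ) :
    (σ ^ ((1 : ℝ) / 4)) ^ n = σ ^ ((n : ℝ) / 4) := by
  rw [← Real.rpow_mul_natCast hσ]
  ring_nf

end

end VoronoiLaplace

open VoronoiLaplace

theorem stmt_9 :
    Tendsto Elaplace (nhdsWithin 0 (Set.Ioi 0)) (nhds 1) ∧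
    (fun σ : ℝ => Elaplace σ -
        (1 - 665 * Real.sqrt 3 / 1024 * σ ^ ((1 : ℝ) / 4)
          + 49 / (768 * Real.sqrt 3) * σ ^ ((3 : ℝ) / 4) + 63 / 80 * σ))
      =O[nhdsWithin 0 (Set.Ioi 0)] fun σ : ℝ => σ ^ ((5 : ℝ) / 4) := by
  have hσ := tendsto_rpow_one_div_four_nhdsGT
  constructor
  · have hexp : Tendsto (fun r => expansion (√3 * r)) (𝓝[>] 0) (𝓝 1) := by
      have h : Continuous fun r => expansion (√3 * r) := by unfold expansion; fun_prop
      simpa [expansion] using (h.tendsto 0).mono_left nhdsWithin_le_nhds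
    have hpow : Tendsto (fun r : ℝ => r ^ 5) (𝓝[>] 0) (𝓝 0) := by
      simpa using ((continuous_pow 5).tendsto (0 : ℝ)).mono_left nhdsWithin_le_nhds
    have h := (numeratorWith_exp_div_sub_expansion_isBigO.trans_tendsto hpow).add hexp
    simp only [sub_add_cancel, zero_add] at h
    exact h.comp hσ
  · refine (numeratorWith_exp_div_sub_expansion_isBigO.comp_tendsto hσ).congr' ?_ ?_ <;>
      filter_upwards [self_mem_nhdsWithin] with σ (hσ : 0 < σ)
    · simp only [Function.comp_apply, expansion_sqrt_three_mul, ← Elaplace_eq,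
        rpow_one_div_four_pow hσ.le]
      norm_num [← Real.rpow_natCast, ← Real.rpow_mul hσ.le]
    · simp only [Function.comp_apply, rpow_one_div_four_pow hσ.le]
      norm_num
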